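/- arXiv:2103.15574 — 3 statements merged into one kernel-verified Lean document; each statement's English description precedes it below -/
import Mathlib

section
/- Let G be a finite 2-Frobenius group with respect to normal subgroups K ≤ L, and let D be a subgroup of G containing K such that D/K is a Frobenius complement of L/K in G/K. Then D is a Hall subgroup of G, i.e., |D| and the index |G : D| are coprime. -/
/-!
Let `H` be a Frobenius complement of `K` in `L`. Modulo `K`, `L/K ≅ H` is a complement of `D/K`
in `G/K`, so `|G : D| = |G/K : D/K| = |L/K| = |H|`, while `|D| = |K| |D/K|`. Coprimality thus
reduces to `gcd(|K|, |H|) = 1` and `gcd(|D/K|, |L/K|) = 1`, the order coprimality of kernel and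
complement in the Frobenius groups `L` and `G/K`.
-/

/-- The cyclic graph `Δ(G)`: vertices are the nonidentity elements of `G`,
with distinct `x` and `y` adjacent iff `⟨x, y⟩` is cyclic. -/
def cyclicGraph (G : Type*) [Group G] : SimpleGraph {x : G // x ≠ 1} where
  Adj x y := x ≠ y ∧ IsCyclic ↥(Subgroup.closure ({(x : G), (y : G)} : Set G))
  symm := by
    constructor
    rintro x y ⟨hne, hcyc⟩
    refine ⟨hne.symm, ?_⟩
    rwa [Set.pair_comm]
  loopless := ⟨fun x h => h.1 rfl⟩

/-- `H` is a Frobenius complement of `K` in `L` (all subgroups of an ambient group `G`):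
`H ≤ L`, `H` is nontrivial, `L = KH`, `K ⊓ H = 1`, and `C_K(h) = 1` for all `1 ≠ h ∈ H`. -/
def IsFrobeniusComplementIn {G : Type*} [Group G] (K L H : Subgroup G) : Prop :=
  H ≤ L ∧ H ≠ ⊥ ∧ (∀ x ∈ L, ∃ k ∈ K, ∃ h ∈ H, x = k * h) ∧ K ⊓ H = ⊥ ∧
    ∀ h ∈ H, h ≠ 1 → ∀ k ∈ K, Commute h k → k = 1

/-- `G` is a Frobenius group with kernel `K` and complement `H`. -/
def IsFrobenius (G : Type*) [Group G] (K H : Subgroup G) : Prop :=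
  K.Normal ∧ K ≠ ⊥ ∧ IsFrobeniusComplementIn K ⊤ H

/-- `G` is a 2-Frobenius group with respect to the normal subgroups `K ≤ L`:
`L` is a Frobenius group with kernel `K` (and some complement), and `G/K` is a
Frobenius group with kernel `L/K` (and some complement). -/
def Is2Frobenius (G : Type*) [Group G] (K L : Subgroup G) [K.Normal] [L.Normal] : Prop :=
  K ≠ ⊥ ∧ K < L ∧
    (∃ H : Subgroup G, IsFrobeniusComplementIn K L H) ∧
    (∃ C : Subgroup (G ⧸ K),
      IsFrobeniusComplementIn (L.map (QuotientGroup.mk' K)) ⊤ C)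

namespace Subgroup

variable {G : Type*} [Group G]

/-- An element of prime order `p` in `H` generates a `p`-group acting on `N` by conjugation with
the single fixed point `1`, so `p ∤ |N|`. -/
theorem coprime_card_of_forall_commute_eq_one [Finite G] (N H : Subgroup G) [N.Normal]
    (hfree : ∀ h ∈ H, h ≠ 1 → ∀ n ∈ N, Commute h n → n = 1) :
    (Nat.card N).Coprime (Nat.card H) := by
  refine Nat.coprime_of_dvd fun p hp hpN hpH => ?_
  have := Fact.mk hp
  obtain ⟨h, hh⟩ := exists_prime_orderOf_dvd_card' p hpH
  have hP : IsPGroup p (zpowers (ConjAct.toConjAct (h : G))) :=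
    IsPGroup.of_card (n := 1) <| by
      rw [Nat.card_zpowers, ConjAct.toConjAct.orderOf_eq, orderOf_submonoid, hh, pow_one]
  obtain ⟨n, hn, hn1⟩ :=
    hP.exists_fixed_point_of_prime_dvd_card_of_fixed_point N hpN (a := 1) fun _ => smul_one _
  have hcomm : Commute (h : G) n := by
    have := congrArg Subtype.val (hn ⟨_, mem_zpowers _⟩)
    exact mul_inv_eq_iff_eq_mul.mp this
  have hh1 : (h : G) ≠ 1 := by
    rintro hh1
    rw [OneMemClass.coe_eq_one.mp hh1, orderOf_one] at hh
    exact hp.one_lt.ne hh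
  exact hn1 (Subtype.ext (hfree h h.2 hh1 n n.2 hcomm).symm)

theorem card_map_of_ker_inf_eq_bot {G' : Type*} [Group G'] (f : G →* G') {H : Subgroup G}
    (h : f.ker ⊓ H = ⊥) : Nat.card (H.map f) = Nat.card H := by
  rw [← relIndex_ker, ← inf_relIndex_right, h, relIndex_bot_left]

theorem card_eq_card_mul_card_map_mk {K D : Subgroup G} [K.Normal] (hKD : K ≤ D) :
    Nat.card D = Nat.card K * Nat.card (D.map (QuotientGroup.mk' K)) := by
  calc Nat.card D = Nat.card K * K.relIndex D := by
        rw [← relIndex_bot_left K, ← relIndex_bot_left D, relIndex_mul_relIndex ⊥ K D bot_le hKD]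
    _ = Nat.card K * Nat.card (D.map (QuotientGroup.mk' K)) := by
        rw [← relIndex_ker, QuotientGroup.ker_mk']

theorem map_mk_eq_map_of_le_mul {K L H : Subgroup G} [K.Normal] (hHL : H ≤ L)
    (hL : ∀ x ∈ L, ∃ k ∈ K, ∃ h ∈ H, x = k * h) :
    L.map (QuotientGroup.mk' K) = H.map (QuotientGroup.mk' K) := by
  refine le_antisymm ?_ (map_mono hHL)
  rintro _ ⟨x, hx, rfl⟩
  obtain ⟨k, hk, h, hh, rfl⟩ := hL x hx
  exact ⟨h, hh, by simp [(QuotientGroup.eq_one_iff k).mpr hk]⟩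

theorem isComplement'_of_inf_eq_bot_of_forall_eq_mul {N C : Subgroup G} (hNC : N ⊓ C = ⊥)
    (hmul : ∀ x, ∃ n ∈ N, ∃ c ∈ C, x = n * c) : N.IsComplement' C := by
  refine isComplement'_of_disjoint_and_mul_eq_univ (disjoint_iff.mpr hNC) ?_
  refine Set.eq_univ_of_forall fun x => ?_
  obtain ⟨n, hn, c, hc, rfl⟩ := hmul x
  exact Set.mul_mem_mul hn hc

end Subgroup

theorem D_is_Hall
    {G : Type*} [Group G] [Fintype G] (K L : Subgroup G) [K.Normal] [L.Normal]
    (h2 : Is2Frobenius G K L) (D : Subgroup G) (hKD : K ≤ D)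
    (hD : IsFrobeniusComplementIn (L.map (QuotientGroup.mk' K)) ⊤
      (D.map (QuotientGroup.mk' K))) :
    Nat.Coprime (Nat.card D) D.index := by
  obtain ⟨-, -, ⟨H, hHL, -, hLKH, hKH, hH⟩, -⟩ := h2
  obtain ⟨-, -, hGLD, hLD, hD⟩ := hD
  have hLK : Nat.card (L.map (QuotientGroup.mk' K)) = Nat.card H := by
    rw [Subgroup.map_mk_eq_map_of_le_mul hHL hLKH,
      Subgroup.card_map_of_ker_inf_eq_bot _ (by rwa [QuotientGroup.ker_mk'])]
  have hindex : D.index = Nat.card H := by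
    have hcompl := Subgroup.isComplement'_of_inf_eq_bot_of_forall_eq_mul hLD fun x => hGLD x trivial
    rw [← Subgroup.index_map_eq _ (QuotientGroup.mk'_surjective K) (by rwa [QuotientGroup.ker_mk']),
      hcompl.index_eq_card, hLK]
  rw [Subgroup.card_eq_card_mul_card_map_mk hKD, hindex]
  exact Nat.Coprime.mul_left (Subgroup.coprime_card_of_forall_commute_eq_one K H hH)
    (hLK ▸ (Subgroup.coprime_card_of_forall_commute_eq_one _ _ hD).symm)
end

section
/- Let G be a finite group, let p be a prime, and let a ∈ G be an element of order p such that the centralizer C_G(a) is a p-group. Then for every element b ≠ a in the connected component of a in the cyclic graph Δ(G), the subgroup ⟨a, b⟩ is cyclic; in particular, every element of order p lying in the connected component of a belongs to ⟨a⟩ \ {1}. -/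
/-!
Every vertex `x` of `Δ(G)` with `a ∈ ⟨x⟩` passes this property to its neighbours. Indeed, if
`⟨x, y⟩` is cyclic then `y` commutes with `x`, hence with `a`, so `y` lies in the `p`-group
`C_G(a)` and `p ∣ |y|`. In the cyclic group `⟨x, y⟩`, which contains `a`, an element lies in
`⟨y⟩` as soon as its order divides `|y|`; thus `a ∈ ⟨y⟩`. Along a path, `a ∈ ⟨b⟩` for every `b`
in the component of `a`, so `⟨a, b⟩ = ⟨b⟩`, and `⟨b⟩ = ⟨a⟩` when `|b| = p`.
-/

open Subgroup

open Finset in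
theorem IsCyclic.mem_zpowers_of_orderOf_dvd {α : Type*} [Group α] [Finite α] [IsCyclic α]
    {x y : α} (h : orderOf x ∣ orderOf y) : x ∈ zpowers y := by
  classical
  have := Fintype.ofFinite α
  -- `zpowers y` already has `orderOf y` solutions of `w ^ orderOf y = 1`, and a cyclic group
  -- has no more than that.
  have hsub : (zpowers y : Set α).toFinset ⊆ ({w | w ^ orderOf y = 1} : Finset α) := by
    intro w hw
    rw [Finset.mem_filter_univ, ← orderOf_dvd_iff_pow_eq_one]
    exact orderOf_dvd_of_mem_zpowers (Set.mem_toFinset.mp hw)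
  have hcard : #{w : α | w ^ orderOf y = 1} ≤ #(zpowers y : Set α).toFinset := by
    rw [Set.toFinset_card, ← Nat.card_eq_fintype_card]
    exact (IsCyclic.card_pow_eq_one_le (orderOf_pos y)).trans_eq (Nat.card_zpowers y).symm
  have hx : x ∈ ({w | w ^ orderOf y = 1} : Finset α) := by
    rwa [Finset.mem_filter_univ, ← orderOf_dvd_iff_pow_eq_one]
  rw [← Finset.eq_of_subset_of_card_le hsub hcard, Set.mem_toFinset] at hx
  exact hx

theorem Subgroup.mem_zpowers_of_orderOf_dvd {G : Type*} [Group G] (H : Subgroup G)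
    [IsCyclic H] [Finite H] {x y : G} (hx : x ∈ H) (hy : y ∈ H) (h : orderOf x ∣ orderOf y) :
    x ∈ zpowers y := by
  have hmem : (⟨x, hx⟩ : H) ∈ zpowers (⟨y, hy⟩ : H) :=
    IsCyclic.mem_zpowers_of_orderOf_dvd (by simpa only [orderOf_mk] using h)
  simpa [MonoidHom.map_zpowers] using mem_map_of_mem H.subtype hmem

theorem mem_zpowers_of_isCyclic_closure_pair {G : Type*} [Group G] [Finite G] {p : ℕ}
    (hp : p.Prime) {a : G} (ha : orderOf a = p) (hc : IsPGroup p (centralizer ({a} : Set G)))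
    {x y : G} (hy : y ≠ 1) (hax : a ∈ zpowers x) (hxy : IsCyclic (closure ({x, y} : Set G))) :
    a ∈ zpowers y := by
  set H := closure ({x, y} : Set G)
  have hxH : x ∈ H := subset_closure (Set.mem_insert _ _)
  have hyH : y ∈ H := subset_closure (Set.mem_insert_of_mem _ rfl)
  let _ : CommGroup H := IsCyclic.commGroup
  have hcomm : Commute x y := congrArg Subtype.val (mul_comm (⟨x, hxH⟩ : H) ⟨y, hyH⟩)
  have hya : y ∈ centralizer ({a} : Set G) := by
    obtain ⟨n, rfl⟩ := mem_zpowers_iff.mp hax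
    exact mem_centralizer_singleton_iff.mpr (hcomm.zpow_left n).eq.symm
  have hpy : p ∣ orderOf y := by
    have := Fact.mk hp
    simpa only [orderOf_mk] using
      hc.dvd_orderOf (g := ⟨y, hya⟩) (by simpa [Subtype.ext_iff] using hy)
  exact H.mem_zpowers_of_orderOf_dvd (zpowers_le.mpr hxH hax) hyH (ha ▸ hpy)

theorem cyclicGraph.mem_zpowers_of_reachable {G : Type*} [Group G] [Finite G] {p : ℕ}
    (hp : p.Prime) {a : G} (ha : orderOf a = p) (hc : IsPGroup p (centralizer ({a} : Set G)))
    {u v : {x : G // x ≠ 1}} (huv : (cyclicGraph G).Reachable u v) (hu : a ∈ zpowers (u : G)) :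
    a ∈ zpowers (v : G) := by
  obtain ⟨w⟩ := huv
  induction w with
  | nil => exact hu
  | @cons _ v _ hadj _ ih =>
    exact ih (mem_zpowers_of_isCyclic_closure_pair hp ha hc v.2 hu hadj.2)

theorem pGroup_centralizer_component
    {G : Type*} [Group G] [Fintype G] (p : ℕ) (hp : p.Prime)
    (a : G) (ha : orderOf a = p) (ha1 : a ≠ 1)
    (hc : IsPGroup p (Subgroup.centralizer ({a} : Set G))) :
    (∀ (b : G) (hb1 : b ≠ 1), b ≠ a →
        (cyclicGraph G).Reachable ⟨a, ha1⟩ ⟨b, hb1⟩ →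
        IsCyclic ↥(Subgroup.closure ({a, b} : Set G))) ∧
    (∀ (b : G) (hb1 : b ≠ 1), orderOf b = p →
        (cyclicGraph G).Reachable ⟨a, ha1⟩ ⟨b, hb1⟩ →
        b ∈ Subgroup.zpowers a ∧ b ≠ 1) := by
  have hab : ∀ (b : G) (hb1 : b ≠ 1), (cyclicGraph G).Reachable ⟨a, ha1⟩ ⟨b, hb1⟩ →
      a ∈ zpowers b := fun b hb1 hreach =>
    cyclicGraph.mem_zpowers_of_reachable hp ha hc hreach (mem_zpowers a)
  refine ⟨fun b hb1 _ hreach => ?_, fun b hb1 hb hreach => ⟨?_, hb1⟩⟩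
  · have hcl : closure ({a, b} : Set G) = zpowers b := by
      refine le_antisymm ((closure_le _).mpr ?_) (zpowers_le.mpr (subset_closure (by simp)))
      rw [Set.insert_subset_iff, Set.singleton_subset_iff]
      exact ⟨hab b hb1 hreach, mem_zpowers b⟩
    rw [hcl]
    infer_instance
  · exact (zpowers b).mem_zpowers_of_orderOf_dvd (mem_zpowers b) (hab b hb1 hreach)
      (by rw [ha, hb])
end

section
/- Let G be a finite Frobenius group with kernel K and complement H. If U is a subgroup of G with U ∩ K = 1, then there exists g ∈ G such that U ≤ H^g, where H^g = g⁻¹Hg. -/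
section FrobHelpers

variable {G : Type*} [Group G] {K H : Subgroup G}


/-- Core rigidity: if `k ∈ K` conjugates a nontrivial element of `H` into `H`, then `k = 1`. -/
lemma frob_core (hN : K.Normal) (hint : K ⊓ H = ⊥)
    (hfpf : ∀ h ∈ H, h ≠ 1 → ∀ k ∈ K, Commute h k → k = 1)
    {k h : G} (hk : k ∈ K) (hh : h ∈ H) (hne : h ≠ 1)
    (hmem : k * h * k⁻¹ ∈ H) : k = 1 := by
  have hcK : k * h * k⁻¹ * h⁻¹ ∈ K := by
    have h1 : h * k⁻¹ * h⁻¹ ∈ K := hN.conj_mem _ (K.inv_mem hk) h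
    have h2 : k * (h * k⁻¹ * h⁻¹) ∈ K := K.mul_mem hk h1
    have heq : k * (h * k⁻¹ * h⁻¹) = k * h * k⁻¹ * h⁻¹ := by group
    rwa [heq] at h2
  have hcH : k * h * k⁻¹ * h⁻¹ ∈ H := H.mul_mem hmem (H.inv_mem hh)
  have hc1 : k * h * k⁻¹ * h⁻¹ = 1 := by
    have : k * h * k⁻¹ * h⁻¹ ∈ K ⊓ H := ⟨hcK, hcH⟩
    rwa [hint, Subgroup.mem_bot] at this
  have hkh : k * h = h * k := by
    have h' : (k * h) * (h * k)⁻¹ = 1 := by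
      rw [mul_inv_rev, ← mul_assoc]; exact hc1
    exact mul_inv_eq_one.mp h'
  exact hfpf h hh hne k hk hkh.symm

/-- Uniqueness of the conjugate of `H` containing a given nontrivial element. -/
lemma frob_unique (hN : K.Normal) (hint : K ⊓ H = ⊥)
    (hfpf : ∀ h ∈ H, h ≠ 1 → ∀ k ∈ K, Commute h k → k = 1)
    (hKH : ∀ x : G, ∃ k ∈ K, ∃ h ∈ H, x = k * h)
    {x g₁ g₂ : G} (hx : x ≠ 1)
    (h1 : g₁⁻¹ * x * g₁ ∈ H) (h2 : g₂⁻¹ * x * g₂ ∈ H) : g₁⁻¹ * g₂ ∈ H := by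
  obtain ⟨k, hk, h, hh, ha⟩ := hKH (g₂⁻¹ * g₁)
  have hne1 : g₁⁻¹ * x * g₁ ≠ 1 := by
    intro hc
    apply hx
    have : x = g₁ * (g₁⁻¹ * x * g₁) * g₁⁻¹ := by group
    rw [this, hc]; group
  have key : (g₂⁻¹ * g₁) * (g₁⁻¹ * x * g₁) * (g₂⁻¹ * g₁)⁻¹ = g₂⁻¹ * x * g₂ := by group
  have hmem : k * (h * (g₁⁻¹ * x * g₁) * h⁻¹) * k⁻¹ ∈ H := by
    have : k * (h * (g₁⁻¹ * x * g₁) * h⁻¹) * k⁻¹ = g₂⁻¹ * x * g₂ := by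
      rw [← key, ha]; group
    rw [this]; exact h2
  have hh' : h * (g₁⁻¹ * x * g₁) * h⁻¹ ∈ H := H.mul_mem (H.mul_mem hh h1) (H.inv_mem hh)
  have hne' : h * (g₁⁻¹ * x * g₁) * h⁻¹ ≠ 1 := by
    intro hc
    apply hne1
    have : g₁⁻¹ * x * g₁ = h⁻¹ * (h * (g₁⁻¹ * x * g₁) * h⁻¹) * h := by group
    rw [this, hc]; group
  have hk1 : k = 1 := frob_core hN hint hfpf hk hh' hne' hmem
  have : g₂⁻¹ * g₁ ∈ H := by rw [ha, hk1, one_mul]; exact hh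
  have := H.inv_mem this
  rwa [mul_inv_rev, inv_inv] at this




lemma frob_card (hint : K ⊓ H = ⊥)
    (hKH : ∀ x : G, ∃ k ∈ K, ∃ h ∈ H, x = k * h) :
    Nat.card K * Nat.card H = Nat.card G := by
  have hbij : Function.Bijective (fun p : K × H => (p.1 : G) * p.2) := by
    constructor
    · rintro ⟨⟨k₁, hk₁⟩, ⟨h₁, hh₁⟩⟩ ⟨⟨k₂, hk₂⟩, ⟨h₂, hh₂⟩⟩ heq
      simp only [Prod.mk.injEq, Subtype.mk.injEq] at heq ⊢
      have h' : k₂⁻¹ * k₁ = h₂ * h₁⁻¹ := by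
        calc k₂⁻¹ * k₁ = k₂⁻¹ * (k₁ * h₁) * h₁⁻¹ := by group
          _ = k₂⁻¹ * (k₂ * h₂) * h₁⁻¹ := by rw [heq]
          _ = h₂ * h₁⁻¹ := by group
      have hm : k₂⁻¹ * k₁ ∈ K ⊓ H := ⟨K.mul_mem (K.inv_mem hk₂) hk₁,
        h' ▸ H.mul_mem hh₂ (H.inv_mem hh₁)⟩
      rw [hint, Subgroup.mem_bot] at hm
      have hk : k₁ = k₂ := (inv_mul_eq_one.mp hm).symm
      refine ⟨hk, ?_⟩
      rw [hk] at heq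
      exact mul_left_cancel heq
    · intro x
      obtain ⟨k, hk, h, hh, hx⟩ := hKH x
      exact ⟨(⟨k, hk⟩, ⟨h, hh⟩), hx.symm⟩
  rw [← Nat.card_prod]
  exact Nat.card_eq_of_bijective _ hbij

lemma frob_exists_conj [Fintype G] (hN : K.Normal) (hint : K ⊓ H = ⊥)
    (hfpf : ∀ h ∈ H, h ≠ 1 → ∀ k ∈ K, Commute h k → k = 1)
    (hKH : ∀ x : G, ∃ k ∈ K, ∃ h ∈ H, x = k * h)
    {x : G} (hx : x ∉ K) : ∃ g : G, g⁻¹ * x * g ∈ H := by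
  classical
  set f : K × {h : H // h ≠ 1} → {y : G // y ∉ K} := fun p =>
    ⟨(p.1 : G) * (p.2.1 : G) * (p.1 : G)⁻¹, by
      intro hmem
      have hK : (p.2.1 : G) ∈ K := by
        have : (p.1 : G)⁻¹ * ((p.1 : G) * (p.2.1 : G) * (p.1 : G)⁻¹) * (p.1 : G) ∈ K :=
          K.mul_mem (K.mul_mem (K.inv_mem p.1.2) hmem) p.1.2
        simpa [mul_assoc] using this
      have : (p.2.1 : G) ∈ K ⊓ H := ⟨hK, p.2.1.2⟩
      rw [hint, Subgroup.mem_bot] at this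
      exact p.2.2 (Subtype.ext this)⟩ with hf
  have hinj : Function.Injective f := by
    rintro ⟨⟨k₁, hk₁⟩, ⟨⟨h₁, hh₁⟩, hn₁⟩⟩ ⟨⟨k₂, hk₂⟩, ⟨⟨h₂, hh₂⟩, hn₂⟩⟩ heq
    simp only [hf, Subtype.mk.injEq] at heq
    have hne₁ : h₁ ≠ 1 := fun hc => hn₁ (Subtype.ext hc)
    have hmem : (k₂⁻¹ * k₁) * h₁ * (k₂⁻¹ * k₁)⁻¹ ∈ H := by
      have heq2 : (k₂⁻¹ * k₁) * h₁ * (k₂⁻¹ * k₁)⁻¹ = h₂ := by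
        calc (k₂⁻¹ * k₁) * h₁ * (k₂⁻¹ * k₁)⁻¹
            = k₂⁻¹ * (k₁ * h₁ * k₁⁻¹) * k₂ := by group
          _ = k₂⁻¹ * (k₂ * h₂ * k₂⁻¹) * k₂ := by rw [heq]
          _ = h₂ := by group
      rw [heq2]; exact hh₂
    have hk1 : k₂⁻¹ * k₁ = 1 :=
      frob_core hN hint hfpf (K.mul_mem (K.inv_mem hk₂) hk₁) hh₁ hne₁ hmem
    have hkk : k₁ = k₂ := (inv_mul_eq_one.mp hk1).symm
    subst hkk
    have hhh : h₁ = h₂ := by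
      rw [mul_right_cancel_iff, mul_left_cancel_iff] at heq
      exact heq
    simp_all
  have hG : Fintype.card G = Fintype.card K * Fintype.card H := by
    have := frob_card hint hKH
    simpa [Nat.card_eq_fintype_card] using this.symm
  have hcard : Fintype.card (K × {h : H // h ≠ 1}) = Fintype.card {y : G // y ∉ K} := by
    have h1 : Fintype.card {h : H // h ≠ 1} = Fintype.card H - 1 := by
      rw [Fintype.card_subtype_compl, Fintype.card_subtype_eq]
    have h2 : Fintype.card {y : G // y ∉ K} = Fintype.card G - Fintype.card K := by
      rw [Fintype.card_subtype_compl]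
    rw [Fintype.card_prod, h1, h2, hG]
    have hpos : 0 < Fintype.card H := Fintype.card_pos
    have : Fintype.card K * (Fintype.card H - 1) + Fintype.card K
        = Fintype.card K * Fintype.card H := by
      rw [← Nat.mul_succ, Nat.sub_one, Nat.succ_pred_eq_of_pos hpos]
    omega
  have hsurj : Function.Surjective f :=
    ((Fintype.bijective_iff_injective_and_card f).mpr ⟨hinj, hcard⟩).2
  obtain ⟨⟨⟨k, hk⟩, ⟨⟨h, hh⟩, hn⟩⟩, hfx⟩ := hsurj ⟨x, hx⟩
  simp only [hf, Subtype.mk.injEq] at hfx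
  refine ⟨k, ?_⟩
  have hxk : k⁻¹ * x * k = h := by rw [← hfx]; group
  rw [hxk]; exact hh


end FrobHelpers

theorem subgroup_trivial_inter_kernel_in_conjugate_of_complement
    {G : Type*} [Group G] [Fintype G] (K H : Subgroup G) (hF : IsFrobenius G K H)
    (U : Subgroup G) (hU : U ⊓ K = ⊥) :
    ∃ g : G, ∀ u ∈ U, g * u * g⁻¹ ∈ H := by
  classical
  obtain ⟨hN, hKbot, hHle, hHbot, hKH', hint, hfpf⟩ := hF
  have hKH : ∀ x : G, ∃ k ∈ K, ∃ h ∈ H, x = k * h := fun x => hKH' x trivial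
  by_cases hUbot : U = ⊥
  · refine ⟨1, fun u hu => ?_⟩
    rw [hUbot, Subgroup.mem_bot] at hu
    simp only [hu, mul_one, one_mul, inv_one]
    exact H.one_mem
  have hu2 : 2 ≤ Fintype.card U := by
    obtain ⟨a, ha⟩ := Subgroup.ne_bot_iff_exists_ne_one.mp hUbot
    exact Fintype.one_lt_card_iff_nontrivial.mpr ⟨a, 1, ha⟩
  have hUK : ∀ x : G, x ∈ U → x ≠ 1 → x ∉ K := by
    intro x hxU hx hxK
    exact hx (by rw [← Subgroup.mem_bot, ← hU]; exact ⟨hxU, hxK⟩)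
  have key : ∃ ω : G ⧸ H, ∀ x : U, x • ω = ω := by
    by_contra hno
    push_neg at hno
    -- each nontrivial element of U fixes exactly one point of G ⧸ H
    have hfix1 : ∀ x : U, (x : G) ≠ 1 →
        Fintype.card (MulAction.fixedBy (G ⧸ H) x) = 1 := by
      intro x hx
      rw [Fintype.card_eq_one_iff]
      obtain ⟨g, hg⟩ := frob_exists_conj hN hint hfpf hKH (hUK x x.2 hx)
      have hginv : g⁻¹ * (x : G)⁻¹ * g ∈ H := by
        have := H.inv_mem hg
        simpa [mul_assoc] using this
      have hfixg : x • (QuotientGroup.mk g : G ⧸ H) = QuotientGroup.mk g := by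
        change (x : G) • (QuotientGroup.mk g : G ⧸ H) = _
        rw [MulAction.Quotient.smul_mk]
        refine (QuotientGroup.eq).mpr ?_
        simpa [mul_assoc, smul_eq_mul] using hginv
      refine ⟨⟨QuotientGroup.mk g, hfixg⟩, ?_⟩
      rintro ⟨ω', hω'⟩
      obtain ⟨g', rfl⟩ := QuotientGroup.mk_surjective ω'
      have h1 : g'⁻¹ * (x : G) * g' ∈ H := by
        have hmem : MulAction.fixedBy (G ⧸ H) x (QuotientGroup.mk g') := hω'
        have : x • (QuotientGroup.mk g' : G ⧸ H) = QuotientGroup.mk g' := hmem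
        change (x : G) • (QuotientGroup.mk g' : G ⧸ H) = _ at this
        rw [MulAction.Quotient.smul_mk] at this
        have h2 := (QuotientGroup.eq).mp this
        simp only [smul_eq_mul, mul_inv_rev] at h2
        simpa [mul_assoc] using H.inv_mem h2
      have hgg : g'⁻¹ * g ∈ H := frob_unique hN hint hfpf hKH hx h1 hg
      exact Subtype.ext ((QuotientGroup.eq).mpr hgg)
    -- Burnside
    have hburn := MulAction.sum_card_fixedBy_eq_card_orbits_mul_card_group
      (G := U) (X := G ⧸ H)
    have hone : Fintype.card (MulAction.fixedBy (G ⧸ H) (1 : U)) = Fintype.card (G ⧸ H) := by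
      apply Fintype.card_eq.mpr
      refine ⟨Equiv.subtypeUnivEquiv ?_⟩
      intro ω
      simp [MulAction.mem_fixedBy]
    rw [← Finset.sum_erase_add _ _ (Finset.mem_univ (1 : U))] at hburn
    have hs : ∀ x ∈ Finset.univ.erase (1 : U),
        Fintype.card (MulAction.fixedBy (G ⧸ H) x) = 1 := by
      intro x hxmem
      have hx1 : x ≠ 1 := (Finset.mem_erase.mp hxmem).1
      exact hfix1 x (fun hc => hx1 (Subtype.ext hc))
    rw [Finset.sum_congr rfl hs, Finset.sum_const, smul_eq_mul, mul_one,
      Finset.card_erase_of_mem (Finset.mem_univ _), Finset.card_univ, hone] at hburn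
    -- hburn : (card U - 1) + card (G⧸H) = card Q * card U
    set u := Fintype.card U with hu_def
    set Q := MulAction.orbitRel.Quotient U (G ⧸ H) with hQ_def
    set o : Q → ℕ := fun ω => Fintype.card (MulAction.orbit U ω.out) with ho_def
    have hupos : 0 < u := by omega
    have hdec : Fintype.card (G ⧸ H) = ∑ ω : Q, o ω := by
      rw [Fintype.card_congr (MulAction.selfEquivSigmaOrbits U (G ⧸ H)), Fintype.card_sigma]
    have hodvd : ∀ ω : Q, o ω ∣ u := by
      intro ω
      exact ⟨Fintype.card (MulAction.stabilizer U ω.out),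
        (MulAction.card_orbit_mul_card_stabilizer_eq_card_group U ω.out).symm⟩
    have hou : ∀ ω : Q, o ω ≤ u := fun ω => Nat.le_of_dvd hupos (hodvd ω)
    have ho2 : ∀ ω : Q, 2 ≤ o ω := by
      intro ω
      obtain ⟨x, hx⟩ := hno ω.out
      refine Fintype.one_lt_card_iff_nontrivial.mpr
        ⟨⟨ω.out, MulAction.mem_orbit_self _⟩, ⟨x • ω.out, MulAction.mem_orbit _ _⟩, ?_⟩
      intro hc
      exact hx (congrArg Subtype.val hc).symm
    have hS : (∑ ω : Q, (u - o ω)) + ∑ ω : Q, o ω = Fintype.card Q * u := by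
      rw [← Finset.sum_add_distrib]
      have : ∀ ω ∈ Finset.univ (α := Q), (u - o ω) + o ω = u := fun ω _ =>
        Nat.sub_add_cancel (hou ω)
      rw [Finset.sum_congr rfl this, Finset.sum_const, smul_eq_mul, Finset.card_univ]
    have hSval : ∑ ω : Q, (u - o ω) = u - 1 := by
      rw [← hdec] at hS
      generalize hp : Fintype.card Q * u = p at hS hburn
      omega
    have hhalf : ∀ ω : Q, o ω ≠ u → 2 * o ω ≤ u := by
      intro ω hne
      obtain ⟨c, hc⟩ := hodvd ω
      have hc2 : 2 ≤ c := by
        rcases c with _ | _ | c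
        · omega
        · simp at hc; omega
        · omega
      calc 2 * o ω = o ω * 2 := by ring
        _ ≤ o ω * c := Nat.mul_le_mul_left _ hc2
        _ = u := hc.symm
    set A : Finset Q := Finset.univ.filter (fun ω => o ω ≠ u) with hA_def
    have hSA : ∑ ω ∈ A, (u - o ω) = u - 1 := by
      rw [← hSval]
      apply Finset.sum_subset (Finset.subset_univ A)
      intro ω _ hωA
      have : o ω = u := by
        by_contra hne
        exact hωA (Finset.mem_filter.mpr ⟨Finset.mem_univ _, hne⟩)
      omega
    rcases Finset.eq_empty_or_nonempty A with hAe | ⟨ω₁, hω₁⟩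
    · rw [hAe, Finset.sum_empty] at hSA
      omega
    · have hω₁ne : o ω₁ ≠ u := (Finset.mem_filter.mp hω₁).2
      by_cases hA1 : A = {ω₁}
      · rw [hA1, Finset.sum_singleton] at hSA
        have := ho2 ω₁
        have := hou ω₁
        omega
      · have : ∃ ω₂ ∈ A, ω₂ ≠ ω₁ := by
          by_contra hc
          push_neg at hc
          exact hA1 (Finset.eq_singleton_iff_unique_mem.mpr ⟨hω₁, hc⟩)
        obtain ⟨ω₂, hω₂, hne12⟩ := this
        have hpair : ({ω₂, ω₁} : Finset Q) ⊆ A := by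
          intro ω hω
          rcases Finset.mem_insert.mp hω with h | h
          · exact h ▸ hω₂
          · exact (Finset.mem_singleton.mp h) ▸ hω₁
        have hle : (u - o ω₂) + (u - o ω₁) ≤ ∑ ω ∈ A, (u - o ω) := by
          have := Finset.sum_le_sum_of_subset (f := fun ω => u - o ω) hpair
          rwa [Finset.sum_pair hne12] at this
        have h1 := hhalf ω₁ hω₁ne
        have h2 := hhalf ω₂ (Finset.mem_filter.mp hω₂).2
        have := hou ω₁; have := hou ω₂
        omega
  obtain ⟨ω, hω⟩ := key
  obtain ⟨g, rfl⟩ := QuotientGroup.mk_surjective ω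
  refine ⟨g⁻¹, fun v hv => ?_⟩
  have hfix := hω ⟨v, hv⟩
  change (v : G) • (QuotientGroup.mk g : G ⧸ H) = _ at hfix
  rw [MulAction.Quotient.smul_mk] at hfix
  have h2 := (QuotientGroup.eq).mp hfix
  simp only [smul_eq_mul, mul_inv_rev] at h2
  have h3 := H.inv_mem h2
  simpa [mul_assoc] using h3
end
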